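/- Let 𝔸 = (A, ≤, →, Σ) be an implicative algebra with |A| < κ for a strongly inaccessible cardinal κ, and let W, ∈_W, =_W and the interpretation ‖·‖ be as defined below. Then W validates the Union axiom: ‖∀x ∃u ∀y(y ∈ x → ∀z(z ∈ y → z ∈ u))‖ ∈ Σ. -/

import Mathlib

/-!
The witness for `u` is the union `⋃ a`, the partial function `(t, s) ↦ (a t)(s)` on pairs with
`t ∈ dom a` and `s ∈ dom (a t)`; it lies in `W_κ` because `κ` is regular. A single realizer works
for all `a`, `y`, `z`: from `y ∈ a` it extracts some `t` with `a t = y`, hence `y ⊆ a t`; from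
`z ∈ y` some `s'` with `y s' = z`; then `y ⊆ a t` yields `s` with `(a t) s = y s'`, and transitivity
of `=_W` gives `(a t) s = z`, i.e. `z ∈ ⋃ a`.

Transitivity of `=_W` is proved by induction on rank, and its realizer must not depend on the rank:
it is the fixed point, under Turing's combinator, of the realizer of one induction step. All
realizers are λ-terms compiled into `S` and `K` by bracket abstraction, which puts them in `Σ`.
-/

universe u

/-- An implicative algebra `𝔸 = (A, ≤, →, Σ)`:  a complete lattice `(A, ≤)` together with an
implication `imp` which is antitone in its first argument, monotone in its second argument and
turns infima in the second argument into infima, and a separator `Sig ⊆ A` which is upward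
closed, closed under modus ponens and contains the combinators `K` and `S`. -/
structure ImplicativeAlgebra (A : Type u) [CompleteLattice A] where
  imp : A → A → A
  imp_antitone : ∀ ⦃a a' b : A⦄, a ≤ a' → imp a' b ≤ imp a b
  imp_monotone : ∀ ⦃a b b' : A⦄, b ≤ b' → imp a b ≤ imp a b'
  imp_sInf : ∀ (a : A) (S : Set A), imp a (sInf S) = ⨅ b ∈ S, imp a b
  Sig : Set A
  Sig_upward : ∀ ⦃a b : A⦄, a ∈ Sig → a ≤ b → b ∈ Sig
  Sig_mp : ∀ ⦃a b : A⦄, imp a b ∈ Sig → a ∈ Sig → b ∈ Sig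
  Sig_K : (⨅ a : A, ⨅ b : A, imp a (imp b a)) ∈ Sig
  Sig_S : (⨅ a : A, ⨅ b : A, ⨅ c : A,
      imp (imp a (imp b c)) (imp (imp a b) (imp a c))) ∈ Sig

namespace ImplicativeAlgebra

variable {A : Type u} [CompleteLattice A]

/-- `a × b := ⨅ x, ((a → (b → x)) → x)`. -/
def times (IA : ImplicativeAlgebra A) (a b : A) : A :=
  ⨅ x : A, IA.imp (IA.imp a (IA.imp b x)) x

/-- `a + b := ⨅ x, ((a → x) → ((b → x) → x))`. -/
def plus (IA : ImplicativeAlgebra A) (a b : A) : A :=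
  ⨅ x : A, IA.imp (IA.imp a x) (IA.imp (IA.imp b x) x)

/-- `∃⃗_{i} f i := ⨅ x, ((⨅ i, (f i → x)) → x)`.  (`∀⃗` is just `⨅`.) -/
def aex (IA : ImplicativeAlgebra A) {ι : Sort*} (f : ι → A) : A :=
  ⨅ x : A, IA.imp (⨅ i, IA.imp (f i) x) x

/-- `φ ⊢_{Σ[I]} ψ` iff `⨅ i, (φ i → ψ i) ∈ Σ`. -/
def SigLe (IA : ImplicativeAlgebra A) {ι : Sort*} (f g : ι → A) : Prop :=
  (⨅ i, IA.imp (f i) (g i)) ∈ IA.Sig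

/-- `φ ≡_{Σ[I]} ψ` iff `φ ⊢_{Σ[I]} ψ` and `ψ ⊢_{Σ[I]} φ`. -/
def SigEquiv (IA : ImplicativeAlgebra A) {ι : Sort*} (f g : ι → A) : Prop :=
  IA.SigLe f g ∧ IA.SigLe g f

end ImplicativeAlgebra

/-- Pre-elements of the cumulative hierarchy of partial functions valued in `A`:
an element is an `A`-labelled family of previously constructed elements, i.e. a partial
function (presented by a family indexed by its domain) from earlier elements to `A`. -/
inductive PreW (A : Type u) : Type (u + 1)
  | mk (ι : Type u) (fam : ι → PreW A) (val : ι → A)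

namespace PreW

variable {A : Type u}

/-- The (index type of the) domain of a partial function. -/
def dom : PreW A → Type u
  | ⟨ι, _, _⟩ => ι

/-- The family of elements of the domain. -/
def fam : (w : PreW A) → w.dom → PreW A
  | ⟨_, f, _⟩ => f

/-- The values in `A` of the partial function. -/
def val : (w : PreW A) → w.dom → A
  | ⟨_, _, v⟩ => v

/-- `w` is hereditarily of size `< κ`:  this carves out exactly the elements of the stage
`W_κ` of the hierarchy (for `κ` inaccessible). -/
def HSmall (κ : Cardinal.{u}) : PreW A → Prop
  | ⟨ι, f, _⟩ => Cardinal.mk ι < κ ∧ ∀ i, HSmall κ (f i)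

theorem HSmall.fam {κ : Cardinal.{u}} :
    ∀ {w : PreW A}, w.HSmall κ → ∀ i : w.dom, (w.fam i).HSmall κ
  | ⟨_, _, _⟩, h, i => h.2 i

/-- The rank of an element of the hierarchy. -/
noncomputable def rank : PreW A → Ordinal.{u}
  | ⟨_, f, _⟩ => ⨆ i, Order.succ (rank (f i))

theorem rank_lt_mk {ι : Type u} (f : ι → PreW A) (v : ι → A) (i : ι) :
    (f i).rank < (PreW.mk ι f v).rank := by
  have h : Order.succ (f i).rank ≤ ⨆ j, Order.succ (f j).rank := Ordinal.le_iSup _ i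
  have : (f i).rank < ⨆ j, Order.succ (f j).rank :=
    lt_of_lt_of_le (Order.lt_succ _) h
  simpa [rank] using this

end PreW

namespace ImplicativeAlgebra

variable {A : Type u} [CompleteLattice A]

/-- `α =_W β`, defined by recursion on rank:
`α =_W β := (α ⊆_W β) × (β ⊆_W α)` where
`α ⊆_W β := ∀⃗_{t ∈ dom α} (α t → (fam α t ∈_W β))` and
`γ ∈_W β := ∃⃗_{s ∈ dom β} (β s × (fam β s =_W γ))`. -/
noncomputable def eqW (IA : ImplicativeAlgebra A) : PreW A → PreW A → A
  | ⟨ι₁, f₁, v₁⟩, ⟨ι₂, f₂, v₂⟩ =>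
    IA.times
      (⨅ t : ι₁, IA.imp (v₁ t)
        (IA.aex fun s : ι₂ => IA.times (v₂ s) (IA.eqW (f₂ s) (f₁ t))))
      (⨅ t : ι₂, IA.imp (v₂ t)
        (IA.aex fun s : ι₁ => IA.times (v₁ s) (IA.eqW (f₁ s) (f₂ t))))
termination_by α β => max α.rank β.rank
decreasing_by
  · exact max_lt (lt_max_of_lt_right (PreW.rank_lt_mk f₂ v₂ s))
      (lt_max_of_lt_left (PreW.rank_lt_mk f₁ v₁ t))
  · exact max_lt (lt_max_of_lt_left (PreW.rank_lt_mk f₁ v₁ s))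
      (lt_max_of_lt_right (PreW.rank_lt_mk f₂ v₂ t))

/-- `α ∈_W β := ∃⃗_{s ∈ dom β} (β s × (fam β s =_W α))`. -/
noncomputable def memW (IA : ImplicativeAlgebra A) (α β : PreW A) : A :=
  IA.aex fun s : β.dom => IA.times (β.val s) (IA.eqW (β.fam s) α)

/-- `α ⊆_W β := ∀⃗_{t ∈ dom α} (α t → (fam α t ∈_W β))`. -/
noncomputable def subW (IA : ImplicativeAlgebra A) (α β : PreW A) : A :=
  ⨅ t : α.dom, IA.imp (α.val t) (IA.memW (α.fam t) β)

end ImplicativeAlgebra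

/-- The stage `W = W_κ` of the hierarchy: all hereditarily `< κ`-sized elements. -/
def WSet (A : Type u) (κ : Cardinal.{u}) : Type (u + 1) :=
  {w : PreW A // w.HSmall κ}

/-- An element of the domain of `w ∈ W`, as an element of `W`. -/
def WSet.fam {A : Type u} {κ : Cardinal.{u}} (w : WSet A κ) (i : w.1.dom) : WSet A κ :=
  ⟨w.1.fam i, w.2.fam i⟩

/-- Formulas (in context of length `n`) of the first-order language of set theory, with
(de Bruijn-style) variables `Fin n`, binary predicates `∈` and `=`, connectives `⊥`, `∧`, `∨`,
`→` and quantifiers `∃`, `∀` (binding the last variable of the enlarged context). -/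
inductive SetFormula : ℕ → Type
  | bot {n : ℕ} : SetFormula n
  | mem {n : ℕ} (i j : Fin n) : SetFormula n
  | eq {n : ℕ} (i j : Fin n) : SetFormula n
  | and {n : ℕ} (φ ψ : SetFormula n) : SetFormula n
  | or {n : ℕ} (φ ψ : SetFormula n) : SetFormula n
  | imp {n : ℕ} (φ ψ : SetFormula n) : SetFormula n
  | ex {n : ℕ} (φ : SetFormula (n + 1)) : SetFormula n
  | all {n : ℕ} (φ : SetFormula (n + 1)) : SetFormula n

namespace SetFormula

/-- Renaming of variables (since the only terms of the language of set theory are variables,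
substitution is a special case). -/
def rename : {n m : ℕ} → (Fin n → Fin m) → SetFormula n → SetFormula m
  | _, _, _, .bot => .bot
  | _, _, f, .mem i j => .mem (f i) (f j)
  | _, _, f, .eq i j => .eq (f i) (f j)
  | _, _, f, .and φ ψ => .and (φ.rename f) (ψ.rename f)
  | _, _, f, .or φ ψ => .or (φ.rename f) (ψ.rename f)
  | _, _, f, .imp φ ψ => .imp (φ.rename f) (ψ.rename f)
  | _, _, f, .ex φ => .ex (φ.rename (Fin.snoc (Fin.castSucc ∘ f) (Fin.last _)))
  | _, _, f, .all φ => .all (φ.rename (Fin.snoc (Fin.castSucc ∘ f) (Fin.last _)))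

/-- Universal closure `∀x₁ … ∀xₙ φ` of a formula in context of length `n`. -/
def allClose : {n : ℕ} → SetFormula n → SetFormula 0
  | 0, φ => φ
  | _ + 1, φ => allClose (.all φ)

end SetFormula

namespace ImplicativeAlgebra

variable {A : Type u} [CompleteLattice A]

/-- The interpretation `‖φ[x₁,…,xₙ]‖ : Wⁿ → A` of a formula in context, by recursion on the
structure of `φ`:  atomic formulas are interpreted by `∈_W` and `=_W`, `∧` by `×`, `∨` by `+`,
`→` by `→`, `∃` by `∃⃗` over `W` and `∀` by `∀⃗` (i.e. `⨅`) over `W`. -/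
noncomputable def interp (IA : ImplicativeAlgebra A) (κ : Cardinal.{u}) :
    {n : ℕ} → SetFormula n → (Fin n → WSet A κ) → A
  | _, .bot, _ => ⊥
  | _, .mem i j, v => IA.memW (v i).1 (v j).1
  | _, .eq i j, v => IA.eqW (v i).1 (v j).1
  | _, .and φ ψ, v => IA.times (IA.interp κ φ v) (IA.interp κ ψ v)
  | _, .or φ ψ, v => IA.plus (IA.interp κ φ v) (IA.interp κ ψ v)
  | _, .imp φ ψ, v => IA.imp (IA.interp κ φ v) (IA.interp κ ψ v)
  | _, .ex φ, v => IA.aex fun β : WSet A κ => IA.interp κ φ (Fin.snoc v β)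
  | _, .all φ, v => ⨅ β : WSet A κ, IA.interp κ φ (Fin.snoc v β)

end ImplicativeAlgebra

namespace PreW

variable {A : Type u}

theorem rank_fam_lt (w : PreW A) (i : w.dom) : (w.fam i).rank < w.rank := by
  cases w with | mk ι f v => exact rank_lt_mk f v i

def sUnion (a : PreW A) : PreW A :=
  mk (Σ t : a.dom, (a.fam t).dom) (fun p => (a.fam p.1).fam p.2) (fun p => (a.fam p.1).val p.2)

theorem HSmall.dom_lt {κ : Cardinal.{u}} {w : PreW A} (h : w.HSmall κ) :
    Cardinal.mk w.dom < κ := by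
  cases w; exact h.1

theorem HSmall.sUnion {κ : Cardinal.{u}} (hκ : κ.IsRegular) {a : PreW A} (ha : a.HSmall κ) :
    a.sUnion.HSmall κ := by
  refine ⟨?_, fun p => (ha.fam p.1).fam p.2⟩
  rw [Cardinal.mk_sigma]
  exact Cardinal.sum_lt_of_isRegular hκ ha.dom_lt fun t => (ha.fam t).dom_lt

end PreW

namespace ImplicativeAlgebra

/-- Combinatory terms with de Bruijn variables and constants from `A`. -/
inductive Term (A : Type u) : Type u
  | var : ℕ → Term A
  | const : A → Term A
  | K : Term A
  | S : Term A
  | app : Term A → Term A → Term A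

namespace Term

variable {A : Type u}

/-- Bracket abstraction of the variable `0`. -/
def lam : Term A → Term A
  | var 0 => app (app S K) K
  | var (j + 1) => app K (var j)
  | app t u => app (app S t.lam) u.lam
  | t => app K t

/-- The free variables of `t` are below `n` and its constants lie in `s`. -/
def WellScoped (s : Set A) (n : ℕ) : Term A → Prop
  | var i => i < n
  | const a => a ∈ s
  | app t u => t.WellScoped s n ∧ u.WellScoped s n
  | _ => True

theorem WellScoped.lam {s : Set A} {n : ℕ} :
    ∀ {t : Term A}, t.WellScoped s (n + 1) → t.lam.WellScoped s n
  | var 0, _ => ⟨⟨trivial, trivial⟩, trivial⟩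
  | var (_ + 1), h => ⟨trivial, Nat.lt_of_succ_lt_succ h⟩
  | const _, h => ⟨trivial, h⟩
  | K, _ => ⟨trivial, trivial⟩
  | S, _ => ⟨trivial, trivial⟩
  | app _ _, h => ⟨⟨trivial, h.1.lam⟩, h.2.lam⟩

end Term

variable {A : Type u} [CompleteLattice A] (IA : ImplicativeAlgebra A)

def ap (a b : A) : A := sInf {x | a ≤ IA.imp b x}

def K : A := ⨅ a : A, ⨅ b : A, IA.imp a (IA.imp b a)

def S : A := ⨅ a : A, ⨅ b : A, ⨅ c : A,
  IA.imp (IA.imp a (IA.imp b c)) (IA.imp (IA.imp a b) (IA.imp a c))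

variable {IA}

local infixr:60 " ⇒ " => IA.imp

theorem ap_le_iff {a b c : A} : IA.ap c a ≤ b ↔ c ≤ a ⇒ b := by
  refine ⟨fun h => ?_, fun h => sInf_le h⟩
  have hap : c ≤ a ⇒ IA.ap c a := by
    rw [ap, IA.imp_sInf]
    exact le_iInf₂ fun x hx => hx
  exact hap.trans (IA.imp_monotone h)

theorem le_imp_ap {a c : A} : c ≤ a ⇒ IA.ap c a := ap_le_iff.1 le_rfl

theorem ap_le {a b c x : A} (hc : c ≤ a ⇒ b) (hx : x ≤ a) : IA.ap c x ≤ b :=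
  ap_le_iff.2 (hc.trans (IA.imp_antitone hx))

theorem ap_le₂ {a b d c x y : A} (hc : c ≤ a ⇒ b ⇒ d) (hx : x ≤ a) (hy : y ≤ b) :
    IA.ap (IA.ap c x) y ≤ d :=
  ap_le (ap_le hc hx) hy

theorem ap_mono {c c' x x' : A} (hc : c ≤ c') (hx : x ≤ x') : IA.ap c x ≤ IA.ap c' x' :=
  ap_le (hc.trans le_imp_ap) hx

theorem ap_mem {c x : A} (hc : c ∈ IA.Sig) (hx : x ∈ IA.Sig) : IA.ap c x ∈ IA.Sig :=
  IA.Sig_mp (IA.Sig_upward hc le_imp_ap) hx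

theorem le_imp_iInf {ι : Sort*} {c a : A} {f : ι → A} (h : ∀ i, c ≤ a ⇒ f i) :
    c ≤ a ⇒ ⨅ i, f i :=
  ap_le_iff.1 (le_iInf fun i => ap_le_iff.2 (h i))

theorem ap_K {a b : A} : IA.ap (IA.ap IA.K a) b ≤ a :=
  ap_le₂ ((iInf_le _ a).trans (iInf_le _ b)) le_rfl le_rfl

theorem ap_S {a b c : A} :
    IA.ap (IA.ap (IA.ap IA.S a) b) c ≤ IA.ap (IA.ap a c) (IA.ap b c) := by
  have hS : IA.S ≤ (c ⇒ IA.ap b c ⇒ IA.ap (IA.ap a c) (IA.ap b c)) ⇒ (c ⇒ IA.ap b c) ⇒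
      c ⇒ IA.ap (IA.ap a c) (IA.ap b c) :=
    (iInf_le _ c).trans ((iInf_le _ _).trans (iInf_le _ _))
  exact ap_le (ap_le₂ hS (le_imp_ap.trans (IA.imp_monotone le_imp_ap)) le_imp_ap) le_rfl

open Term

variable (IA) in
def den : Term A → List A → A
  | var i, ρ => ρ.getD i ⊥
  | const a, _ => a
  | .K, _ => IA.K
  | .S, _ => IA.S
  | app t u, ρ => IA.ap (den t ρ) (den u ρ)

theorem ap_den_lam_le {t : Term A} {ρ : List A} {a : A} :
    IA.ap (IA.den t.lam ρ) a ≤ IA.den t (a :: ρ) := by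
  induction t with
  | var i => cases i with
    | zero => exact ap_S.trans ap_K
    | succ j => exact ap_K
  | const => exact ap_K
  | K => exact ap_K
  | S => exact ap_K
  | app t u iht ihu => exact ap_S.trans (ap_mono iht ihu)

theorem den_lam_le_imp {t : Term A} {ρ : List A} {a b : A} (h : IA.den t (a :: ρ) ≤ b) :
    IA.den t.lam ρ ≤ a ⇒ b :=
  ap_le_iff.1 (ap_den_lam_le.trans h)

theorem den_mem {t : Term A} (h : t.WellScoped IA.Sig 0) : IA.den t [] ∈ IA.Sig := by
  induction t with
  | var i => exact absurd h (Nat.not_lt_zero i)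
  | const => exact h
  | K => exact IA.Sig_K
  | S => exact IA.Sig_S
  | app t u iht ihu => exact ap_mem (iht h.1) (ihu h.2)

local prefix:max "#" => Term.var
local prefix:50 "ƛ " => Term.lam
local infixl:70 " ⬝ " => Term.app
local notation "⌜" a "⌝" => Term.const a

variable (IA) in
def pair : A := IA.den (ƛ ƛ ƛ (#0 ⬝ #2 ⬝ #1)) []

theorem pair_le {a b : A} : IA.pair ≤ a ⇒ b ⇒ IA.times a b :=
  den_lam_le_imp (den_lam_le_imp (le_iInf fun _ => den_lam_le_imp (ap_le₂ le_rfl le_rfl le_rfl)))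

theorem pair_mem : IA.pair ∈ IA.Sig := den_mem (by simp [WellScoped, Term.lam])

variable (IA) in
def fst : A := IA.den (ƛ (#0 ⬝ (ƛ ƛ #1))) []

theorem fst_le {a b : A} : IA.fst ≤ IA.times a b ⇒ a :=
  den_lam_le_imp (ap_le (iInf_le _ a) (den_lam_le_imp (den_lam_le_imp le_rfl)))

theorem fst_mem : IA.fst ∈ IA.Sig := den_mem (by simp [WellScoped, Term.lam])

variable (IA) in
def snd : A := IA.den (ƛ (#0 ⬝ (ƛ ƛ #0))) []

theorem snd_le {a b : A} : IA.snd ≤ IA.times a b ⇒ b :=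
  den_lam_le_imp (ap_le (iInf_le _ b) (den_lam_le_imp (den_lam_le_imp le_rfl)))

theorem snd_mem : IA.snd ∈ IA.Sig := den_mem (by simp [WellScoped, Term.lam])

variable (IA) in
def pack : A := IA.den (ƛ ƛ (#0 ⬝ #1)) []

theorem pack_le {ι : Sort*} {f : ι → A} (i : ι) : IA.pack ≤ f i ⇒ IA.aex f :=
  den_lam_le_imp (le_iInf fun _ => den_lam_le_imp (ap_le (iInf_le _ i) le_rfl))

theorem pack_mem : IA.pack ∈ IA.Sig := den_mem (by simp [WellScoped, Term.lam])

variable (IA) in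
/-- `λ m h. m (λ p. p h)` -/
def unpack : A := IA.den (ƛ ƛ (#1 ⬝ (ƛ (#0 ⬝ #1)))) []

theorem unpack_le {ι : Sort*} {f g : ι → A} {b : A} :
    IA.unpack ≤ IA.aex (fun i => IA.times (f i) (g i)) ⇒ (⨅ i, f i ⇒ g i ⇒ b) ⇒ b :=
  den_lam_le_imp <| den_lam_le_imp <| ap_le (iInf_le _ b) <| le_iInf fun i =>
    den_lam_le_imp (ap_le (iInf_le _ b) (iInf_le _ i))

theorem unpack_mem : IA.unpack ∈ IA.Sig := den_mem (by simp [WellScoped, Term.lam])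

variable (IA) in
/-- Turing's fixed-point combinator `Θ = (λ z f. f (z z f)) (λ z f. f (z z f))`. -/
def turing : A :=
  IA.den ((ƛ ƛ (#0 ⬝ (#1 ⬝ #1 ⬝ #0))) ⬝ (ƛ ƛ (#0 ⬝ (#1 ⬝ #1 ⬝ #0)))) []

theorem turing_mem : IA.turing ∈ IA.Sig := den_mem (by simp [WellScoped, Term.lam])

theorem turing_ap_le {f : A} : IA.ap IA.turing f ≤ IA.ap f (IA.ap IA.turing f) :=
  (ap_mono ap_den_lam_le le_rfl).trans ap_den_lam_le

theorem eqW_eq_times (α β : PreW A) : IA.eqW α β = IA.times (IA.subW α β) (IA.subW β α) := by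
  cases α; cases β; rw [eqW]; rfl

variable (IA) in
noncomputable def eqTrans (α β γ : PreW A) : A := IA.eqW α β ⇒ IA.eqW β γ ⇒ IA.eqW α γ

variable (IA) in
/-- `λ τ m s. unpack m (λ b e. unpack (s b) (λ c e'. pack (pair c (τ e' e))))` -/
def memOfSubset : A :=
  IA.den (ƛ ƛ ƛ (⌜IA.unpack⌝ ⬝ #1 ⬝ (ƛ ƛ (⌜IA.unpack⌝ ⬝ (#2 ⬝ #1) ⬝
    (ƛ ƛ (⌜IA.pack⌝ ⬝ (⌜IA.pair⌝ ⬝ #1 ⬝ (#6 ⬝ #0 ⬝ #2)))))))) []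

theorem memOfSubset_mem : IA.memOfSubset ∈ IA.Sig :=
  den_mem (by simp [WellScoped, Term.lam, unpack_mem, pack_mem, pair_mem])

theorem memOfSubset_le {x β γ : PreW A} :
    IA.memOfSubset ≤ (⨅ r, ⨅ s, IA.eqTrans (γ.fam r) (β.fam s) x) ⇒
      IA.memW x β ⇒ IA.subW β γ ⇒ IA.memW x γ := by
  refine den_lam_le_imp (den_lam_le_imp (den_lam_le_imp ?_))
  refine ap_le₂ unpack_le le_rfl (le_iInf fun s => den_lam_le_imp (den_lam_le_imp ?_))
  refine ap_le₂ unpack_le (ap_le (iInf_le _ s) le_rfl)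
    (le_iInf fun r => den_lam_le_imp (den_lam_le_imp ?_))
  exact ap_le (pack_le r)
    (ap_le₂ pair_le le_rfl (ap_le₂ ((iInf_le _ r).trans (iInf_le _ s)) le_rfl le_rfl))

variable (IA) in
/-- `λ τ s₁ s₂ v. memOfSubset τ (s₁ v) s₂` -/
def subsetTrans : A := IA.den (ƛ ƛ ƛ ƛ (⌜IA.memOfSubset⌝ ⬝ #3 ⬝ (#2 ⬝ #0) ⬝ #1)) []

theorem subsetTrans_mem : IA.subsetTrans ∈ IA.Sig :=
  den_mem (by simp [WellScoped, Term.lam, memOfSubset_mem])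

theorem subsetTrans_le {α β γ : PreW A} :
    IA.subsetTrans ≤ (⨅ t, ⨅ r, ⨅ s, IA.eqTrans (γ.fam r) (β.fam s) (α.fam t)) ⇒
      IA.subW α β ⇒ IA.subW β γ ⇒ IA.subW α γ :=
  den_lam_le_imp <| den_lam_le_imp <| den_lam_le_imp <| le_iInf fun t => den_lam_le_imp <|
    ap_le₂ (ap_le memOfSubset_le (iInf_le _ t)) (ap_le (iInf_le _ t) le_rfl) le_rfl

variable (IA) in
/-- `λ τ e₁ e₂. pair (subsetTrans τ (fst e₁) (fst e₂)) (subsetTrans τ (snd e₂) (snd e₁))` -/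
def eqTransStep : A :=
  IA.den (ƛ ƛ ƛ (⌜IA.pair⌝ ⬝ (⌜IA.subsetTrans⌝ ⬝ #2 ⬝ (⌜IA.fst⌝ ⬝ #1) ⬝ (⌜IA.fst⌝ ⬝ #0)) ⬝
    (⌜IA.subsetTrans⌝ ⬝ #2 ⬝ (⌜IA.snd⌝ ⬝ #0) ⬝ (⌜IA.snd⌝ ⬝ #1)))) []

theorem eqTransStep_mem : IA.eqTransStep ∈ IA.Sig :=
  den_mem (by simp [WellScoped, Term.lam, pair_mem, subsetTrans_mem, fst_mem, snd_mem])

theorem eqTransStep_le {α β γ : PreW A} :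
    IA.eqTransStep ≤ ((⨅ t, ⨅ r, ⨅ s, IA.eqTrans (γ.fam r) (β.fam s) (α.fam t)) ⊓
      (⨅ t, ⨅ r, ⨅ s, IA.eqTrans (α.fam r) (β.fam s) (γ.fam t))) ⇒ IA.eqTrans α β γ := by
  refine den_lam_le_imp (den_lam_le_imp (den_lam_le_imp ?_))
  rw [eqW_eq_times α γ]
  refine ap_le₂ pair_le ?_ ?_
  · exact ap_le₂ (ap_le subsetTrans_le inf_le_left)
      (ap_le fst_le (eqW_eq_times α β).le) (ap_le fst_le (eqW_eq_times β γ).le)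
  · exact ap_le₂ (ap_le subsetTrans_le inf_le_right)
      (ap_le snd_le (eqW_eq_times β γ).le) (ap_le snd_le (eqW_eq_times α β).le)

variable (IA) in
noncomputable def eqTransRealizer : A := IA.ap IA.turing IA.eqTransStep

theorem eqTransRealizer_mem : IA.eqTransRealizer ∈ IA.Sig := ap_mem turing_mem eqTransStep_mem

theorem eqTransRealizer_le (α β γ : PreW A) : IA.eqTransRealizer ≤ IA.eqTrans α β γ :=
  turing_ap_le.trans <| ap_le eqTransStep_le <| le_inf
    (le_iInf fun t => le_iInf₂ fun r s => eqTransRealizer_le (γ.fam r) (β.fam s) (α.fam t))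
    (le_iInf fun t => le_iInf₂ fun r s => eqTransRealizer_le (α.fam r) (β.fam s) (γ.fam t))
termination_by max (max α.rank β.rank) γ.rank
decreasing_by
  all_goals refine max_lt (max_lt ?_ ?_) ?_ <;> simp [PreW.rank_fam_lt]

theorem aex_comp_le {ι ι' : Sort*} (e : ι → ι') (f : ι' → A) : IA.aex (f ∘ e) ≤ IA.aex f :=
  iInf_mono fun _ => IA.imp_antitone (le_iInf fun i => iInf_le _ (e i))

theorem memW_fam_le_memW_sUnion (a : PreW A) (t : a.dom) (z : PreW A) :
    IA.memW z (a.fam t) ≤ IA.memW z a.sUnion :=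
  aex_comp_le (Sigma.mk t) fun p : a.sUnion.dom =>
    IA.times (a.sUnion.val p) (IA.eqW (a.sUnion.fam p) z)

variable (IA) in
/-- `λ m n. unpack m (λ _ e. memOfSubset eqTransRealizer n (snd e))` -/
noncomputable def memSUnion : A :=
  IA.den (ƛ ƛ (⌜IA.unpack⌝ ⬝ #1 ⬝
    (ƛ ƛ (⌜IA.memOfSubset⌝ ⬝ ⌜IA.eqTransRealizer⌝ ⬝ #2 ⬝ (⌜IA.snd⌝ ⬝ #0))))) []

theorem memSUnion_mem : IA.memSUnion ∈ IA.Sig :=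
  den_mem <| by
    simp [WellScoped, Term.lam, unpack_mem, memOfSubset_mem, eqTransRealizer_mem, snd_mem]

theorem memSUnion_le {a y z : PreW A} :
    IA.memSUnion ≤ IA.memW y a ⇒ IA.memW z y ⇒ IA.memW z a.sUnion :=
  den_lam_le_imp <| den_lam_le_imp <| ap_le₂ unpack_le le_rfl <| le_iInf fun t =>
    den_lam_le_imp <| den_lam_le_imp <| le_trans (b := IA.memW z (a.fam t))
      (ap_le₂ (ap_le memOfSubset_le (le_iInf₂ fun _ _ => eqTransRealizer_le _ _ _)) le_rfl
        (ap_le snd_le (eqW_eq_times _ _).le))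
      (memW_fam_le_memW_sUnion a t z)

variable (IA) in
noncomputable def unionRealizer : A := IA.ap IA.pack IA.memSUnion

variable (IA) in
theorem unionRealizer_mem : IA.unionRealizer ∈ IA.Sig := ap_mem pack_mem memSUnion_mem

variable (IA) in
theorem unionRealizer_le {κ : Cardinal.{u}} (hκ : κ.IsRegular) :
    IA.unionRealizer ≤ ⨅ a : WSet A κ, IA.aex fun u : WSet A κ =>
      ⨅ y : WSet A κ, IA.memW y.1 a.1 ⇒ ⨅ z : WSet A κ, IA.memW z.1 y.1 ⇒ IA.memW z.1 u.1 :=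
  le_iInf fun a => ap_le (pack_le ⟨a.1.sUnion, a.2.sUnion hκ⟩) <|
    le_iInf fun _ => le_imp_iInf fun _ => memSUnion_le

end ImplicativeAlgebra

theorem stmt14_general {A : Type u} [CompleteLattice A] (IA : ImplicativeAlgebra A)
    (κ : Cardinal.{u}) (hκ : κ.IsInaccessible) :
    IA.interp κ
      (SetFormula.all (SetFormula.ex (SetFormula.all
        ((SetFormula.mem 2 0).imp
          (SetFormula.all ((SetFormula.mem 3 2).imp (SetFormula.mem 3 1)))))))
      (fun i => i.elim0) ∈ IA.Sig :=
  IA.Sig_upward IA.unionRealizer_mem (IA.unionRealizer_le hκ.isRegular)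

theorem stmt14 {A : Type u} [CompleteLattice A] (IA : ImplicativeAlgebra A)
    (κ : Cardinal.{u}) (hκ : κ.IsInaccessible) (hA : Cardinal.mk A < κ) :
    IA.interp κ
      (SetFormula.all (SetFormula.ex (SetFormula.all
        ((SetFormula.mem 2 0).imp
          (SetFormula.all ((SetFormula.mem 3 2).imp (SetFormula.mem 3 1)))))))
      (fun i => i.elim0) ∈ IA.Sig :=
  stmt14_general IA κ hκ
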